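/- Every n-dimensional evolution algebra over a field K whose annihilator has dimension n − 2 is isotopic to the evolution algebra E_2 with natural basis {e_1,…,e_n} and products e_1e_1 = e_2e_2 = e_1 and e_ie_j = 0 otherwise, or to the evolution algebra E_{5_{0,0}} with natural basis {e_1,…,e_n} and products e_1e_1 = e_1, e_2e_2 = e_2 and e_ie_j = 0 otherwise. -/

import Mathlib

open scoped BigOperators

noncomputable section

/-- The product in the `n`-dimensional evolution algebra over `K` (on the model space
`Fin n → K`, whose standard basis is the natural basis) with structure constants `t`,
so that `eᵢ * eᵢ = ∑ⱼ t i j • eⱼ` and `eᵢ * eⱼ = 0` for `i ≠ j`. -/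
def evolMul {K : Type*} [Field K] {n : ℕ} (t : Fin n → Fin n → K)
    (x y : Fin n → K) : Fin n → K :=
  fun k => ∑ i, x i * y i * t i k

lemma evolMul_add_left {K : Type*} [Field K] {n : ℕ} (t : Fin n → Fin n → K)
    (a b v : Fin n → K) : evolMul t (a + b) v = evolMul t a v + evolMul t b v := by
  funext k
  simp [evolMul, add_mul, Finset.sum_add_distrib]

lemma evolMul_add_right {K : Type*} [Field K] {n : ℕ} (t : Fin n → Fin n → K)
    (v a b : Fin n → K) : evolMul t v (a + b) = evolMul t v a + evolMul t v b := by
  funext k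
  simp [evolMul, mul_add, add_mul, Finset.sum_add_distrib]

lemma evolMul_smul_left {K : Type*} [Field K] {n : ℕ} (t : Fin n → Fin n → K)
    (c : K) (a v : Fin n → K) : evolMul t (c • a) v = c • evolMul t a v := by
  funext k
  simp [evolMul, Finset.mul_sum, mul_assoc]

lemma evolMul_smul_right {K : Type*} [Field K] {n : ℕ} (t : Fin n → Fin n → K)
    (c : K) (v a : Fin n → K) : evolMul t v (c • a) = c • evolMul t v a := by
  funext k
  simp [evolMul, Finset.mul_sum]
  ring_nf
  apply Finset.sum_congr rfl
  intro i _
  ring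

/-- The annihilator of the evolution algebra with structure constants `t`. -/
def evolAnn {K : Type*} [Field K] {n : ℕ} (t : Fin n → Fin n → K) :
    Submodule K (Fin n → K) where
  carrier := {u | ∀ v, evolMul t u v = 0 ∧ evolMul t v u = 0}
  zero_mem' := by
    intro v
    constructor <;> · funext k; simp [evolMul]
  add_mem' := by
    intro a b ha hb v
    exact ⟨by rw [evolMul_add_left, (ha v).1, (hb v).1, add_zero],
           by rw [evolMul_add_right, (ha v).2, (hb v).2, add_zero]⟩
  smul_mem' := by
    intro c a ha v
    exact ⟨by rw [evolMul_smul_left, (ha v).1, smul_zero],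
           by rw [evolMul_smul_right, (ha v).2, smul_zero]⟩

/-- The derived algebra (span of all products). -/
def evolDerived {K : Type*} [Field K] {n : ℕ} (t : Fin n → Fin n → K) :
    Submodule K (Fin n → K) :=
  Submodule.span K {w | ∃ u v, evolMul t u v = w}

/-- Two evolution algebras (given by structure constants) are isomorphic. -/
def EvolIsom {K : Type*} [Field K] {n : ℕ} (t t' : Fin n → Fin n → K) : Prop :=
  ∃ f : (Fin n → K) ≃ₗ[K] (Fin n → K),
    ∀ u v, evolMul t' (f u) (f v) = f (evolMul t u v)

/-- Two evolution algebras (given by structure constants) are isotopic. -/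
def EvolIsotopic {K : Type*} [Field K] {n : ℕ} (t t' : Fin n → Fin n → K) : Prop :=
  ∃ f g h : (Fin n → K) ≃ₗ[K] (Fin n → K),
    ∀ u v, evolMul t' (f u) (g v) = h (evolMul t u v)

/-- Two evolution algebras (given by structure constants) are strongly isotopic. -/
def EvolStrongIsotopic {K : Type*} [Field K] {n : ℕ} (t t' : Fin n → Fin n → K) : Prop :=
  ∃ f h : (Fin n → K) ≃ₗ[K] (Fin n → K),
    ∀ u v, evolMul t' (f u) (f v) = h (evolMul t u v)

/-! A natural basis vector `eᵢ` lies in the annihilator exactly when its square `t i` vanishes,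
so an annihilator of codimension two means exactly two nonzero rows `t a`, `t b`, and then
`u * v = (u a v a) t a + (u b v b) t b`. An isotopy may permute coordinates (moving `a, b` to
`0, 1`), rescale the coordinates of one factor, and apply any linear automorphism to the
product. If `t b = c t a`, rescaling the `b`-th coordinate by `c` and sending `t a` to `e₀`
gives `E₂`; if `t a, t b` are independent, sending them to `e₀, e₁` gives `E_{5_{0,0}}`. -/

theorem Equiv.Perm.exists_apply_eq_and_apply_eq {α : Type*} [DecidableEq α] {a b c d : α}
    (hab : a ≠ b) (hcd : c ≠ d) : ∃ σ : Equiv.Perm α, σ a = c ∧ σ b = d := by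
  set b' := Equiv.swap a c b
  have hb' : b' ≠ c := by
    simpa [b'] using (Equiv.swap a c).injective.ne hab.symm
  refine ⟨(Equiv.swap a c).trans (Equiv.swap b' d), ?_, ?_⟩
  · simp [Equiv.swap_apply_of_ne_of_ne hb'.symm hcd]
  · simp [b']

theorem LinearIndependent.exists_linearEquiv_apply_eq {K V ι : Type*} [DivisionRing K]
    [AddCommGroup V] [Module K V] [Finite ι] {v w : ι → V} (hv : LinearIndependent K v)
    (hw : LinearIndependent K w) : ∃ g : V ≃ₗ[K] V, ∀ i, g (v i) = w i := by
  have := FiniteDimensional.span_of_finite K (Set.finite_range v)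
  obtain ⟨g, hg⟩ := Submodule.exists_linearEquiv_restrict_eq
    ((Module.Basis.span hv).equiv (Module.Basis.span hw) (Equiv.refl ι))
  refine ⟨g, fun i => ?_⟩
  have hgi := hg (Module.Basis.span hv i)
  rw [Module.Basis.equiv_apply, Equiv.refl_apply, Module.Basis.span_apply,
    Module.Basis.span_apply] at hgi
  exact hgi.symm

-- The paper's `E₂` and `E_{5_{0,0}}`, with its `e₁, e₂` indexed `0, 1`.
def evolE2 (K : Type*) [Field K] (n : ℕ) : Fin n → Fin n → K :=
  fun i j => if ((i : ℕ) = 0 ∨ (i : ℕ) = 1) ∧ (j : ℕ) = 0 then 1 else 0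

def evolE500 (K : Type*) [Field K] (n : ℕ) : Fin n → Fin n → K :=
  fun i j => if i = j ∧ (i : ℕ) < 2 then 1 else 0

section Evolution

variable {K : Type*} [Field K] {n : ℕ}

theorem evolMul_eq_sum (t : Fin n → Fin n → K) (u v : Fin n → K) :
    evolMul t u v = ∑ i, (u i * v i) • t i := by
  funext k
  simp [evolMul, Finset.sum_apply]

theorem mem_evolAnn_iff (t : Fin n → Fin n → K) (u : Fin n → K) :
    u ∈ evolAnn t ↔ ∀ i, t i ≠ 0 → u i = 0 := by
  refine ⟨fun hu i hti => ?_, fun hu v => ?_⟩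
  · have h := (hu (Pi.single i 1)).1
    rw [evolMul_eq_sum, Finset.sum_eq_single i (fun j _ hj => by simp [hj]) (by simp)] at h
    simpa [hti] using h
  · have hterm : ∀ w : Fin n → K, ∀ i, (u i * w i) • t i = 0 ∧ (w i * u i) • t i = 0 := by
      intro w i
      by_cases hti : t i = 0
      · simp [hti]
      · simp [hu i hti]
    simp [evolMul_eq_sum, hterm]

theorem finrank_evolAnn_add_card (t : Fin n → Fin n → K) :
    Module.finrank K (evolAnn t) + Nat.card {i // t i ≠ 0} = n := by
  classical
  let restrict := LinearMap.funLeft K K (Subtype.val : {i // t i ≠ 0} → Fin n)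
  have hker : LinearMap.ker restrict = evolAnn t := by
    ext u
    simp [restrict, mem_evolAnn_iff, funext_iff, LinearMap.funLeft]
  have hrange : LinearMap.range restrict = ⊤ := LinearMap.range_eq_top.mpr
    (LinearMap.funLeft_surjective_of_injective _ _ _ Subtype.val_injective)
  have := LinearMap.finrank_range_add_finrank_ker restrict
  rw [hrange, hker, finrank_top, Module.finrank_pi, Module.finrank_fin_fun] at this
  rw [Nat.card_eq_fintype_card]
  omega

theorem exists_two_nonzero_rows_of_finrank_evolAnn {t : Fin n → Fin n → K} (hn : 2 ≤ n)
    (hann : Module.finrank K (evolAnn t) = n - 2) :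
    ∃ a b, a ≠ b ∧ t a ≠ 0 ∧ t b ≠ 0 ∧ ∀ i, i ≠ a → i ≠ b → t i = 0 := by
  have hcard : Nat.card {i // t i ≠ 0} = 2 := by
    have := finrank_evolAnn_add_card t
    omega
  obtain ⟨⟨a, hta⟩, ⟨b, htb⟩, hab, huniv⟩ := Nat.card_eq_two_iff.mp hcard
  refine ⟨a, b, by simpa using hab, hta, htb, fun i hia hib => ?_⟩
  by_contra hti
  have : (⟨i, hti⟩ : {i // t i ≠ 0}) ∈ ({⟨a, hta⟩, ⟨b, htb⟩} : Set _) := huniv ▸ Set.mem_univ _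
  simp [hia, hib] at this

theorem evolIsotopic_of_map_eq_smul_comp_perm {t t' : Fin n → Fin n → K}
    (σ : Equiv.Perm (Fin n)) {c : Fin n → K} (hc : ∀ i, c i ≠ 0)
    (h : (Fin n → K) ≃ₗ[K] (Fin n → K)) (hh : ∀ i, h (t i) = c i • t' (σ i)) :
    EvolIsotopic t t' := by
  let f := LinearEquiv.funCongrLeft K K σ.symm
  let g := (LinearEquiv.piCongrRight fun i => LinearEquiv.smulOfNeZero K K (c i) (hc i)).trans f
  have hf : ∀ x i, f x (σ i) = x i := by simp [f, LinearMap.funLeft]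
  have hg : ∀ x i, g x (σ i) = c i * x i := by simp [g, f, LinearMap.funLeft]
  refine ⟨f, g, h, fun u v => ?_⟩
  rw [evolMul_eq_sum, evolMul_eq_sum, map_sum, ← Equiv.sum_comp σ]
  refine Finset.sum_congr rfl fun i _ => ?_
  rw [hf, hg, map_smul, hh, smul_smul]
  ring_nf

theorem evolIsotopic_of_two_rows {t t' : Fin n → Fin n → K} {a b a' b' : Fin n}
    (hab : a ≠ b) (ha'b' : a' ≠ b') (ht : ∀ i, i ≠ a → i ≠ b → t i = 0)
    (ht' : ∀ i, i ≠ a' → i ≠ b' → t' i = 0) (h : (Fin n → K) ≃ₗ[K] (Fin n → K)) {c : K}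
    (hc : c ≠ 0) (ha : h (t a) = t' a') (hb : h (t b) = c • t' b') : EvolIsotopic t t' := by
  obtain ⟨σ, hσa, hσb⟩ := Equiv.Perm.exists_apply_eq_and_apply_eq hab ha'b'
  refine evolIsotopic_of_map_eq_smul_comp_perm σ (c := fun i => if i = b then c else 1)
    (fun i => by split_ifs <;> simp [hc]) h fun i => ?_
  by_cases hib : i = b
  · simp [hib, hσb, hb]
  by_cases hia : i = a
  · simp [hia, hab, hσa, ha]
  rw [ht i hia hib, ht' (σ i) (by rwa [← hσa, σ.injective.ne_iff])
    (by rwa [← hσb, σ.injective.ne_iff])]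
  simp

theorem evolE2_eq_zero {i : Fin n} (h₀ : (i : ℕ) ≠ 0) (h₁ : (i : ℕ) ≠ 1) :
    evolE2 K n i = 0 := by
  funext j
  simp [evolE2, h₀, h₁]

theorem evolE500_eq_zero {i : Fin n} (h₀ : (i : ℕ) ≠ 0) (h₁ : (i : ℕ) ≠ 1) :
    evolE500 K n i = 0 := by
  have hi : ¬(i : ℕ) < 2 := by omega
  funext j
  simp [evolE500, hi]

theorem evolIsotopic_evolE2_of_smul {t : Fin n → Fin n → K} {a b : Fin n} (hn : 2 ≤ n)
    (hab : a ≠ b) (ht : ∀ i, i ≠ a → i ≠ b → t i = 0) (hta : t a ≠ 0) (htb : t b ≠ 0) {c : K}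
    (hc : c • t a = t b) : EvolIsotopic t (evolE2 K n) := by
  let e₀ : Fin n := ⟨0, by omega⟩
  let e₁ : Fin n := ⟨1, by omega⟩
  have hrow : evolE2 K n e₁ = evolE2 K n e₀ := by
    funext j
    simp [evolE2, e₀, e₁]
  have hrow₀ : evolE2 K n e₀ ≠ 0 := fun h => by
    simpa [evolE2, e₀] using congrFun h e₀
  have hc₀ : c ≠ 0 := by
    rintro rfl
    exact htb (by simpa using hc.symm)
  have hli : LinearIndependent K fun _ : Unit => t a := linearIndependent_unique_iff.mpr hta
  have hli' : LinearIndependent K fun _ : Unit => evolE2 K n e₀ :=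
    linearIndependent_unique_iff.mpr hrow₀
  obtain ⟨h, hh⟩ := hli.exists_linearEquiv_apply_eq hli'
  exact evolIsotopic_of_two_rows hab (a' := e₀) (b' := e₁) (by simp [e₀, e₁, Fin.ext_iff]) ht
    (fun i h₀ h₁ => evolE2_eq_zero (Fin.val_ne_of_ne h₀) (Fin.val_ne_of_ne h₁)) h hc₀ (hh ())
    (by rw [← hc, map_smul, hh (), hrow])

theorem evolIsotopic_evolE500_of_linearIndependent {t : Fin n → Fin n → K} {a b : Fin n}
    (hn : 2 ≤ n) (hab : a ≠ b) (ht : ∀ i, i ≠ a → i ≠ b → t i = 0)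
    (hli : LinearIndependent K ![t a, t b]) : EvolIsotopic t (evolE500 K n) := by
  let e₀ : Fin n := ⟨0, by omega⟩
  let e₁ : Fin n := ⟨1, by omega⟩
  have hrow₀ : evolE500 K n e₀ ≠ 0 := fun h => by
    simpa [evolE500, e₀] using congrFun h e₀
  have hli' : LinearIndependent K ![evolE500 K n e₀, evolE500 K n e₁] := by
    rw [LinearIndependent.pair_iff' hrow₀]
    intro c hc
    simpa [evolE500, e₀, e₁] using congrFun hc e₁
  obtain ⟨h, hh⟩ := hli.exists_linearEquiv_apply_eq hli'
  exact evolIsotopic_of_two_rows hab (a' := e₀) (b' := e₁) (by simp [e₀, e₁, Fin.ext_iff]) ht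
    (fun i h₀ h₁ => evolE500_eq_zero (Fin.val_ne_of_ne h₀) (Fin.val_ne_of_ne h₁)) h one_ne_zero
    (hh 0) (by simpa using hh 1)

end Evolution

theorem isotopic_E2_or_E500_of_annihilator_codim_two
    {K : Type*} [Field K] {n : ℕ} (hn : 2 ≤ n) (t : Fin n → Fin n → K)
    (hann : Module.finrank K (evolAnn t) = n - 2) :
    EvolIsotopic t
      (fun i j : Fin n => if ((i : ℕ) = 0 ∨ (i : ℕ) = 1) ∧ (j : ℕ) = 0 then (1 : K) else 0) ∨
    EvolIsotopic t
      (fun i j : Fin n => if i = j ∧ (i : ℕ) < 2 then (1 : K) else 0) := by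
  obtain ⟨a, b, hab, hta, htb, ht⟩ := exists_two_nonzero_rows_of_finrank_evolAnn hn hann
  by_cases hli : LinearIndependent K ![t a, t b]
  · exact Or.inr (evolIsotopic_evolE500_of_linearIndependent hn hab ht hli)
  · obtain ⟨c, hc⟩ : ∃ c : K, c • t a = t b := by
      simpa [LinearIndependent.pair_iff' hta] using hli
    exact Or.inl (evolIsotopic_evolE2_of_smul hn hab ht hta htb hc)
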